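/- Let β > 1/2, assume (ln m_ξ)'' = O(ξ^{−β}) as ξ → ∞, and set σ = max{1/2, 1/β}. Then there is a constant C_μ > 0 such that for every a ∈ Fℓ²_σ the operator K_μ(a) is Hilbert–Schmidt on ℓ²(ℤ≥0); explicitly, Σ_{j,k≥0} |a_{j−k}|² (1 − ρ_{j,k})² ≤ C_μ² ‖a‖²_{Fℓ²_σ}, the left side being the squared Hilbert–Schmidt norm of K_μ(a). -/

import Mathlib

/-!
With `L = log m`, `-log ρ_{j,k} = (L(2j) + L(2k))/2 - L(j + k)` is half a second difference of `L`
with step `|j - k|` taken at points `≥ 2 min(j, k)`, so the hypothesis on `L''` gives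
`0 ≤ 1 - ρ_{j,k} ≲ (j - k)² min(j, k)^{-β}` (`ρ ≤ 1` is Cauchy–Schwarz). On the diagonal
`j - k = n` the squares are therefore bounded by `1` and `≲ n⁴ m^{-2β}`; as `2β > 1`, splitting
at `m ≈ |n|^{2/β}` bounds their sum by `O((1 + |n|)^{2σ})`. Summing the diagonals against
`|a_n|²` gives the Hilbert–Schmidt bound.
-/

open MeasureTheory Filter Complex Asymptotics Topology

noncomputable section

instance : Fact (0 < 2 * Real.pi) := ⟨by positivity⟩

/-- The moment function `m_ξ = ∫_0^∞ r^ξ dμ(r)`. -/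
def mom (μ : Measure ℝ) (ξ : ℝ) : ℝ := ∫ r in Set.Ioi (0:ℝ), r ^ ξ ∂μ

/-- `ρ_{j,k} = m_{j+k} / (m_{2j} m_{2k})^{1/2}`. -/
def rho (μ : Measure ℝ) (j k : ℕ) : ℝ :=
  mom μ ((j : ℝ) + (k : ℝ)) / Real.sqrt (mom μ (2 * (j : ℝ)) * mom μ (2 * (k : ℝ)))

section Moments

variable {μ : Measure ℝ}
  (hmom : ∀ ξ : ℝ, 0 ≤ ξ → IntegrableOn (fun r : ℝ => r ^ ξ) (Set.Ioi (0:ℝ)) μ)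
include hmom

lemma mom_pos (hpos : μ (Set.Ioi (0:ℝ)) ≠ 0) {ξ : ℝ} (hξ : 0 ≤ ξ) : 0 < mom μ ξ := by
  have hsupp : Function.support (fun r : ℝ => r ^ ξ) ∩ Set.Ioi 0 = Set.Ioi 0 :=
    Set.inter_eq_right.2 fun r hr => (Real.rpow_pos_of_pos hr ξ).ne'
  rw [mom, setIntegral_pos_iff_support_of_nonneg_ae _ (hmom ξ hξ), hsupp]
  · exact hpos.bot_lt
  · filter_upwards [ae_restrict_mem measurableSet_Ioi] with r hr
    exact (Real.rpow_pos_of_pos hr ξ).le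

lemma mom_add_le_sqrt_mul {x y : ℝ} (hx : 0 ≤ x) (hy : 0 ≤ y) :
    mom μ (x + y) ≤ Real.sqrt (mom μ (2 * x) * mom μ (2 * y)) := by
  have hsq : ∀ z : ℝ, ∀ r ∈ Set.Ioi (0:ℝ), (r ^ z) ^ (2:ℝ) = r ^ (2 * z) :=
    fun z r hr => by rw [← Real.rpow_mul (le_of_lt hr), mul_comm]
  have hL2 : ∀ z : ℝ, 0 ≤ z →
      MemLp (fun r : ℝ => r ^ z) (ENNReal.ofReal 2) (μ.restrict (Set.Ioi 0)) := fun z hz => by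
    have hmeas : AEStronglyMeasurable (fun r : ℝ => r ^ z) (μ.restrict (Set.Ioi 0)) :=
      (Real.continuous_rpow_const hz).aestronglyMeasurable
    rw [ENNReal.ofReal_ofNat, memLp_two_iff_integrable_sq hmeas]
    refine (hmom (2 * z) (by linarith)).congr_fun (fun r hr => ?_) measurableSet_Ioi
    dsimp only
    rw [← hsq z r hr, Real.rpow_two]
  have hnonneg : ∀ z : ℝ, 0 ≤ᵐ[μ.restrict (Set.Ioi 0)] fun r : ℝ => r ^ z := fun z => by
    filter_upwards [ae_restrict_mem measurableSet_Ioi] with r hr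
    exact Real.rpow_nonneg (le_of_lt hr) z
  have holder := integral_mul_le_Lp_mul_Lq_of_nonneg Real.HolderConjugate.two_two
    (hnonneg x) (hnonneg y) (hL2 x hx) (hL2 y hy)
  rw [setIntegral_congr_fun measurableSet_Ioi (hsq x),
    setIntegral_congr_fun measurableSet_Ioi (hsq y)] at holder
  unfold mom
  rw [Real.sqrt_mul (setIntegral_nonneg measurableSet_Ioi
      fun r hr => Real.rpow_nonneg (le_of_lt hr) _), Real.sqrt_eq_rpow, Real.sqrt_eq_rpow]
  refine le_of_eq_of_le (setIntegral_congr_fun measurableSet_Ioi fun r hr => ?_) holder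
  exact Real.rpow_add hr x y

lemma rho_pos (hpos : μ (Set.Ioi (0:ℝ)) ≠ 0) (j k : ℕ) : 0 < rho μ j k :=
  div_pos (mom_pos hmom hpos (by positivity)) <| Real.sqrt_pos.2 <|
    mul_pos (mom_pos hmom hpos (by positivity)) (mom_pos hmom hpos (by positivity))

lemma rho_le_one (j k : ℕ) : rho μ j k ≤ 1 :=
  div_le_one_of_le₀ (mom_add_le_sqrt_mul hmom (by positivity) (by positivity))
    (Real.sqrt_nonneg _)

lemma log_rho (hpos : μ (Set.Ioi (0:ℝ)) ≠ 0) (j k : ℕ) :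
    Real.log (rho μ j k) = Real.log (mom μ (j + k))
      - (Real.log (mom μ (2 * j)) + Real.log (mom μ (2 * k))) / 2 := by
  have h2j := mom_pos hmom hpos (ξ := 2 * j) (by positivity)
  have h2k := mom_pos hmom hpos (ξ := 2 * k) (by positivity)
  rw [rho, Real.log_div (mom_pos hmom hpos (by positivity)).ne'
      (Real.sqrt_pos.2 (mul_pos h2j h2k)).ne',
    Real.log_sqrt (mul_pos h2j h2k).le, Real.log_mul h2j.ne' h2k.ne']

end Moments

lemma rho_comm (μ : Measure ℝ) (j k : ℕ) : rho μ j k = rho μ k j := by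
  rw [rho, rho, mul_comm (mom μ _), add_comm (j : ℝ)]

def logMoment (μ : Measure ℝ) (k : ℕ) (ξ : ℝ) : ℝ :=
  ∫ r in Set.Ioi (0:ℝ), r ^ ξ * Real.log r ^ k ∂μ

lemma logMoment_zero (μ : Measure ℝ) : logMoment μ 0 = mom μ := by
  ext ξ
  simp [logMoment, mom]

lemma rpow_mul_abs_log_pow_le {r x ξ δ : ℝ} (hr : 0 < r) (hx : |x - ξ| ≤ δ) (k : ℕ) :
    r ^ x * |Real.log r| ^ k ≤ r ^ (ξ - δ - k) + r ^ (ξ + δ + k) := by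
  obtain ⟨hxl, hxu⟩ := abs_le.1 hx
  rcases le_or_gt 1 r with h1 | h1
  · have hlog : |Real.log r| ≤ r := by
      rw [abs_of_nonneg (Real.log_nonneg h1)]
      linarith [Real.log_le_sub_one_of_pos hr]
    calc r ^ x * |Real.log r| ^ k ≤ r ^ (ξ + δ) * r ^ (k : ℝ) := by
          rw [Real.rpow_natCast]
          exact mul_le_mul (Real.rpow_le_rpow_of_exponent_le h1 (by linarith))
            (pow_le_pow_left₀ (abs_nonneg _) hlog k) (by positivity) (Real.rpow_nonneg hr.le _)
      _ = r ^ (ξ + δ + k) := (Real.rpow_add hr _ _).symm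
      _ ≤ _ := le_add_of_nonneg_left (Real.rpow_nonneg hr.le _)
  · have hlog : |Real.log r| ≤ r⁻¹ := by
      rw [abs_of_nonpos (Real.log_nonpos hr.le h1.le), ← Real.log_inv]
      linarith [Real.log_le_sub_one_of_pos (inv_pos.2 hr)]
    calc r ^ x * |Real.log r| ^ k ≤ r ^ (ξ - δ) * r ^ (-k : ℝ) := by
          rw [Real.rpow_neg hr.le, Real.rpow_natCast, ← inv_pow]
          exact mul_le_mul (Real.rpow_le_rpow_of_exponent_ge hr h1.le (by linarith))
            (pow_le_pow_left₀ (abs_nonneg _) hlog k) (by positivity) (Real.rpow_nonneg hr.le _)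
      _ = r ^ (ξ - δ - k) := by rw [← Real.rpow_add hr]; ring_nf
      _ ≤ _ := le_add_of_nonneg_right (Real.rpow_nonneg hr.le _)

section LogMoment

variable {μ : Measure ℝ}
  (hmom : ∀ ξ : ℝ, 0 ≤ ξ → IntegrableOn (fun r : ℝ => r ^ ξ) (Set.Ioi (0:ℝ)) μ)
include hmom

lemma integrableOn_rpow_mul_log_pow {k : ℕ} {ξ : ℝ} (hξ : k ≤ ξ) :
    IntegrableOn (fun r : ℝ => r ^ ξ * Real.log r ^ k) (Set.Ioi 0) μ := by
  have hk : (0:ℝ) ≤ k := Nat.cast_nonneg k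
  refine Integrable.mono' ((hmom (ξ - k) (by linarith)).add (hmom (ξ + k) (by linarith)))
    ((measurable_id.pow_const ξ).mul (Real.measurable_log.pow_const k)).aestronglyMeasurable
    ?_
  filter_upwards [ae_restrict_mem measurableSet_Ioi] with r hr
  rw [norm_mul, norm_pow, Real.norm_of_nonneg (Real.rpow_nonneg (le_of_lt hr) _),
    Real.norm_eq_abs]
  simpa using rpow_mul_abs_log_pow_le hr (by simp : |ξ - ξ| ≤ 0) k

lemma hasDerivAt_logMoment {k : ℕ} {ξ : ℝ} (hξ : k + 3 / 2 ≤ ξ) :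
    HasDerivAt (logMoment μ k) (logMoment μ (k + 1) ξ) ξ := by
  have hbound : ∀ r ∈ Set.Ioi (0:ℝ), ∀ x ∈ Metric.ball ξ (1 / 2),
      ‖r ^ x * Real.log r ^ (k + 1)‖
        ≤ r ^ (ξ - 1 / 2 - ↑(k + 1)) + r ^ (ξ + 1 / 2 + ↑(k + 1)) :=
    fun r hr x hx => by
      rw [norm_mul, norm_pow, Real.norm_of_nonneg (Real.rpow_nonneg (le_of_lt hr) _),
        Real.norm_eq_abs]
      exact rpow_mul_abs_log_pow_le hr (le_of_lt hx) _
  have hk : (0:ℝ) ≤ k := Nat.cast_nonneg k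
  refine (hasDerivAt_integral_of_dominated_loc_of_deriv_le (μ := μ.restrict (Set.Ioi 0))
    (F := fun x r => r ^ x * Real.log r ^ k) (F' := fun x r => r ^ x * Real.log r ^ (k + 1))
    (Metric.ball_mem_nhds ξ one_half_pos)
    (Eventually.of_forall fun x => ((measurable_id.pow_const x).mul
      (Real.measurable_log.pow_const k)).aestronglyMeasurable)
    (integrableOn_rpow_mul_log_pow hmom (by linarith))
    ((measurable_id.pow_const ξ).mul
      (Real.measurable_log.pow_const (k + 1))).aestronglyMeasurable
    ((ae_restrict_mem measurableSet_Ioi).mono hbound)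
    ((hmom _ (by push_cast; linarith)).add (hmom _ (by push_cast; linarith))) ?_).2
  filter_upwards [ae_restrict_mem measurableSet_Ioi] with r hr x _
  exact ((Real.hasStrictDerivAt_const_rpow hr x).hasDerivAt.mul_const (Real.log r ^ k)).congr_deriv
    (by ring)

end LogMoment

section DerivLogMom

variable {μ : Measure ℝ} (hpos : μ (Set.Ioi (0:ℝ)) ≠ 0)
  (hmom : ∀ ξ : ℝ, 0 ≤ ξ → IntegrableOn (fun r : ℝ => r ^ ξ) (Set.Ioi (0:ℝ)) μ)
include hpos hmom

lemma hasDerivAt_log_mom {ξ : ℝ} (hξ : 3 / 2 ≤ ξ) :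
    HasDerivAt (fun t => Real.log (mom μ t)) (logMoment μ 1 ξ / mom μ ξ) ξ := by
  have hd := hasDerivAt_logMoment hmom (k := 0) (by simpa using hξ)
  rw [logMoment_zero] at hd
  exact hd.log (mom_pos hmom hpos (by linarith)).ne'

lemma differentiableAt_deriv_log_mom {ξ : ℝ} (hξ : 5 / 2 < ξ) :
    DifferentiableAt ℝ (deriv fun t => Real.log (mom μ t)) ξ := by
  have heq :
      deriv (fun t => Real.log (mom μ t)) =ᶠ[𝓝 ξ] fun t => logMoment μ 1 t / mom μ t := by
    filter_upwards [Ioi_mem_nhds (show 3 / 2 < ξ by linarith)] with t ht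
    exact (hasDerivAt_log_mom hpos hmom (le_of_lt ht)).deriv
  have hd1 := hasDerivAt_logMoment hmom (k := 1) (ξ := ξ) (by push_cast; linarith)
  have hd0 := hasDerivAt_logMoment hmom (k := 0) (ξ := ξ) (by push_cast; linarith)
  rw [logMoment_zero] at hd0
  rw [heq.differentiableAt_iff]
  exact hd1.differentiableAt.div hd0.differentiableAt (mom_pos hmom hpos (by linarith)).ne'

end DerivLogMom

lemma abs_add_sub_two_mul_le {f f' f'' : ℝ → ℝ} {c h M : ℝ} (hh : 0 ≤ h)
    (hf : ∀ x ∈ Set.Icc (c - h) (c + h), HasDerivAt f (f' x) x)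
    (hf' : ∀ x ∈ Set.Icc (c - h) (c + h), HasDerivAt f' (f'' x) x)
    (hM : ∀ x ∈ Set.Icc (c - h) (c + h), |f'' x| ≤ M) :
    |f (c + h) + f (c - h) - 2 * f c| ≤ 2 * M * h ^ 2 := by
  have hM0 : 0 ≤ M := (abs_nonneg _).trans (hM c ⟨by linarith, by linarith⟩)
  have hmem : ∀ t ∈ Set.Icc 0 h, c + t ∈ Set.Icc (c - h) (c + h) ∧
      c - t ∈ Set.Icc (c - h) (c + h) := fun t ht =>
    ⟨⟨by linarith [ht.1], by linarith [ht.2]⟩, ⟨by linarith [ht.2], by linarith [ht.1]⟩⟩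
  have hg : ∀ t ∈ Set.Icc 0 h,
      HasDerivAt (fun t => f (c + t) + f (c - t)) (f' (c + t) - f' (c - t)) t := fun t ht =>
    (((hf _ (hmem t ht).1).comp_const_add c t).add
      ((hf _ (hmem t ht).2).comp_const_sub c t)).congr_deriv (by ring)
  have hg' : ∀ t ∈ Set.Icc 0 h, ‖f' (c + t) - f' (c - t)‖ ≤ 2 * M * h := fun t ht => by
    have hlip := (convex_Icc (c - h) (c + h)).norm_image_sub_le_of_norm_hasDerivWithin_le
      (fun x hx => (hf' x hx).hasDerivWithinAt)
      (fun x hx => (Real.norm_eq_abs _).le.trans (hM x hx))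
      (hmem t ht).2 (hmem t ht).1
    rw [Real.norm_eq_abs (c + t - (c - t)), show c + t - (c - t) = 2 * t by ring,
      abs_of_nonneg (by linarith [ht.1])] at hlip
    nlinarith [ht.2]
  have key := (convex_Icc 0 h).norm_image_sub_le_of_norm_hasDerivWithin_le
    (fun t ht => (hg t ht).hasDerivWithinAt) hg' ⟨le_rfl, hh⟩ ⟨hh, le_rfl⟩
  simp only [Real.norm_eq_abs, add_zero, sub_zero, abs_of_nonneg hh] at key
  calc |f (c + h) + f (c - h) - 2 * f c| = |f (c + h) + f (c - h) - (f c + f c)| := by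
        rw [← two_mul]
    _ ≤ 2 * M * h * h := key
    _ = 2 * M * h ^ 2 := by ring

section OneSubRho

variable {μ : Measure ℝ} (hpos : μ (Set.Ioi (0:ℝ)) ≠ 0)
  (hmom : ∀ ξ : ℝ, 0 ≤ ξ → IntegrableOn (fun r : ℝ => r ^ ξ) (Set.Ioi (0:ℝ)) μ)
  {β C₀ R : ℝ} (hβ : 0 ≤ β) (hC₀ : 0 ≤ C₀) (hR : 5 / 2 < R)
  (hbound : ∀ ξ, R ≤ ξ →
    |deriv (deriv fun t => Real.log (mom μ t)) ξ| ≤ C₀ * ξ ^ (-β))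
include hpos hmom hβ hC₀ hR hbound

/-- `-log ρ_{j,k}` is half the second difference of `log m` at `j + k` with step `j - k`. -/
lemma one_sub_rho_le_of_le {j k : ℕ} (hkj : k ≤ j) (hk : R ≤ 2 * k) :
    1 - rho μ j k ≤ C₀ * (2 * k : ℝ) ^ (-β) * ((j : ℝ) - k) ^ 2 := by
  set L := fun t => Real.log (mom μ t)
  have hR_le : ∀ x ∈ Set.Icc ((j + k : ℝ) - (j - k)) ((j + k) + (j - k)), R ≤ x :=
    fun x hx => by linarith [hx.1]
  have hsecond := abs_add_sub_two_mul_le (f := L) (f' := deriv L) (f'' := deriv (deriv L))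
    (c := j + k) (h := j - k) (M := C₀ * (2 * k : ℝ) ^ (-β))
    (sub_nonneg.2 (Nat.cast_le.2 hkj))
    (fun x hx =>
      (hasDerivAt_log_mom hpos hmom (by linarith [hR_le x hx])).differentiableAt.hasDerivAt)
    (fun x hx => (differentiableAt_deriv_log_mom hpos hmom (by linarith [hR_le x hx])).hasDerivAt)
    (fun x hx => (hbound x (hR_le x hx)).trans <| mul_le_mul_of_nonneg_left
      (Real.rpow_le_rpow_of_nonpos (by linarith) (by linarith [hx.1]) (by linarith)) hC₀)
  rw [show (j + k : ℝ) + (j - k) = 2 * j by ring, show (j + k : ℝ) - (j - k) = 2 * k by ring]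
    at hsecond
  calc 1 - rho μ j k ≤ -Real.log (rho μ j k) := by
        linarith [Real.log_le_sub_one_of_pos (rho_pos hmom hpos j k)]
    _ = (L (2 * j) + L (2 * k) - 2 * L (j + k)) / 2 := by rw [log_rho hmom hpos]; ring
    _ ≤ C₀ * (2 * k : ℝ) ^ (-β) * ((j : ℝ) - k) ^ 2 := by
        linarith [le_abs_self (L (2 * j) + L (2 * k) - 2 * L (j + k))]

lemma one_sub_rho_diag_le (n : ℤ) {m : ℕ} (hm : R ≤ 2 * m) :
    1 - rho μ (m + n.toNat) (m + (-n).toNat) ≤ C₀ * (2 * m : ℝ) ^ (-β) * (n : ℝ) ^ 2 := by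
  obtain ⟨n, rfl | rfl⟩ := Int.eq_nat_or_neg n
  · simpa using one_sub_rho_le_of_le hpos hmom hβ hC₀ hR hbound (Nat.le_add_right m n) hm
  · rw [rho_comm]
    simpa using one_sub_rho_le_of_le hpos hmom hβ hC₀ hR hbound (Nat.le_add_right m n) hm

end OneSubRho

lemma tsum_comp_add_rpow_neg_le {p : ℝ} (hp : 1 < p) {N : ℕ} (hN : 0 < N) :
    ∑' n : ℕ, ((n + N + 1 : ℕ) : ℝ) ^ (-p) ≤ (N : ℝ) ^ (1 - p) / (p - 1) := by
  have hN' : (0 : ℝ) < N := Nat.cast_pos.2 hN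
  have hint := integral_Ioi_rpow_of_lt (show -p < -1 by linarith) hN'
  rw [show -p + 1 = 1 - p by ring, neg_div, ← div_neg, neg_sub] at hint
  rw [← hint]
  refine AntitoneOn.tsum_comp_add_le_integral N (fun x hx y _ hxy => ?_)
    (integrableOn_Ioi_rpow_of_lt (by linarith) hN') fun x hx => ?_
  · exact Real.rpow_le_rpow_of_nonpos (hN'.trans_le hx) hxy (by linarith)
  · exact Real.rpow_nonneg (hN'.trans hx).le _

/-- Split at the crossover `m ≈ A^{1/p}`: the bound `1` below it, the tail bound above it. -/
lemma summable_and_tsum_le_of_le_mul_rpow {w : ℕ → ℝ} {p A : ℝ} (hp : 1 < p) (hA : 0 ≤ A)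
    (hw0 : ∀ m, 0 ≤ w m) (hw1 : ∀ m, w m ≤ 1) (R : ℕ)
    (htail : ∀ m : ℕ, R ≤ m → w m ≤ A * (m : ℝ) ^ (-p)) :
    Summable w ∧ ∑' m, w m ≤ p / (p - 1) * (R + A ^ (1 / p) + 3) := by
  set Q := R + ⌈A ^ (1 / p)⌉₊ + 1 with hQ
  have hQpos : (0 : ℝ) < Q := Nat.cast_pos.2 (Nat.succ_pos _)
  have hQle : (Q : ℝ) ≤ R + A ^ (1 / p) + 2 := by
    push_cast [hQ]
    linarith [Nat.ceil_lt_add_one (Real.rpow_nonneg hA (1 / p))]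
  have hAQ : A ≤ (Q : ℝ) ^ p := by
    calc A = (A ^ (1 / p)) ^ p := by rw [one_div, Real.rpow_inv_rpow hA (by linarith)]
      _ ≤ (Q : ℝ) ^ p := by
        refine Real.rpow_le_rpow (Real.rpow_nonneg hA _) ((Nat.le_ceil _).trans ?_) (by linarith)
        exact_mod_cast (by omega : ⌈A ^ (1 / p)⌉₊ ≤ Q)
  have htail' : ∀ n : ℕ, w (n + (Q + 1)) ≤ A * ((n + Q + 1 : ℕ) : ℝ) ^ (-p) :=
    fun n => htail _ (by omega)
  have hsum_rpow : Summable fun n : ℕ => ((n + Q + 1 : ℕ) : ℝ) ^ (-p) :=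
    (summable_nat_add_iff (Q + 1)).2 (Real.summable_nat_rpow.2 (by linarith))
  have hsum_tail : Summable fun n => w (n + (Q + 1)) :=
    (hsum_rpow.mul_left A).of_nonneg_of_le (fun n => hw0 _) htail'
  have hw : Summable w := (summable_nat_add_iff (Q + 1)).1 hsum_tail
  refine ⟨hw, ?_⟩
  have hhead : ∑ m ∈ Finset.range (Q + 1), w m ≤ Q + 1 := by
    simpa using Finset.sum_le_card_nsmul (Finset.range (Q + 1)) w 1 fun m _ => hw1 m
  have htail_sum : ∑' n, w (n + (Q + 1)) ≤ Q / (p - 1) :=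
    calc ∑' n, w (n + (Q + 1)) ≤ A * ∑' n : ℕ, ((n + Q + 1 : ℕ) : ℝ) ^ (-p) := by
          rw [← tsum_mul_left]
          exact hsum_tail.tsum_le_tsum htail' (hsum_rpow.mul_left A)
      _ ≤ (Q : ℝ) ^ p * ((Q : ℝ) ^ (1 - p) / (p - 1)) :=
          mul_le_mul hAQ (tsum_comp_add_rpow_neg_le hp (Nat.succ_pos _))
            (tsum_nonneg fun n => Real.rpow_nonneg (Nat.cast_nonneg _) _)
            (Real.rpow_nonneg hQpos.le _)
      _ = Q / (p - 1) := by
          rw [mul_div_assoc', ← Real.rpow_add hQpos, add_sub_cancel, Real.rpow_one]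
  rw [← hw.sum_add_tsum_nat_add (Q + 1)]
  have hp1 : 0 < p - 1 := by linarith
  calc ∑ m ∈ Finset.range (Q + 1), w m + ∑' n, w (n + (Q + 1))
      ≤ (Q + 1) + Q / (p - 1) := add_le_add hhead htail_sum
    _ ≤ p / (p - 1) * (Q + 1) := by
        rw [div_mul_eq_mul_div, le_div_iff₀ hp1]
        field_simp
        nlinarith
    _ ≤ p / (p - 1) * (R + A ^ (1 / p) + 3) :=
        mul_le_mul_of_nonneg_left (by linarith) (by positivity)

lemma abs_rpow_le_one_add_abs_rpow (x : ℝ) {a b : ℝ} (ha : 0 ≤ a) (hab : a ≤ b) :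
    |x| ^ a ≤ (1 + |x|) ^ b :=
  (Real.rpow_le_rpow (abs_nonneg x) (by linarith) ha).trans
    (Real.rpow_le_rpow_of_exponent_le (by linarith [abs_nonneg x]) hab)

lemma exists_tsum_one_sub_rho_sq_le {μ : Measure ℝ} (hpos : μ (Set.Ioi (0:ℝ)) ≠ 0)
    (hmom : ∀ ξ : ℝ, 0 ≤ ξ → IntegrableOn (fun r : ℝ => r ^ ξ) (Set.Ioi (0:ℝ)) μ)
    {β : ℝ} (hβ : 1 / 2 < β)
    (hO : (fun ξ => deriv (deriv fun t => Real.log (mom μ t)) ξ)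
      =O[atTop] fun ξ : ℝ => ξ ^ (-β)) :
    ∃ C > 0, ∀ n : ℤ,
      Summable (fun m : ℕ => (1 - rho μ (m + n.toNat) (m + (-n).toNat)) ^ 2) ∧
      ∑' m : ℕ, (1 - rho μ (m + n.toNat) (m + (-n).toNat)) ^ 2
        ≤ C * (1 + |(n : ℝ)|) ^ (2 * max (1 / 2) (1 / β)) := by
  obtain ⟨C₀, hC₀, hC₀O⟩ := hO.exists_pos
  obtain ⟨R₀, hR₀⟩ := eventually_atTop.1 hC₀O.bound
  set R : ℕ := ⌈max R₀ 3⌉₊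
  have hR : max R₀ 3 ≤ R := Nat.le_ceil _
  have hbound : ∀ ξ : ℝ, R ≤ ξ →
      |deriv (deriv fun t => Real.log (mom μ t)) ξ| ≤ C₀ * ξ ^ (-β) := fun ξ hξ => by
    have hξ0 : 0 ≤ ξ := by linarith [le_max_right R₀ 3]
    simpa [abs_of_nonneg (Real.rpow_nonneg hξ0 _)] using
      hR₀ ξ (by linarith [le_max_left R₀ 3])
  set p := 2 * β
  have hp : 1 < p := by linarith
  refine ⟨p / (p - 1) * (R + (C₀ ^ 2) ^ (1 / p) + 3), by
    have : 0 < p - 1 := by linarith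
    positivity, fun n => ?_⟩
  set A := C₀ ^ 2 * (n : ℝ) ^ 4
  have htail : ∀ m : ℕ, R ≤ m →
      (1 - rho μ (m + n.toNat) (m + (-n).toNat)) ^ 2 ≤ A * (m : ℝ) ^ (-p) := fun m hm => by
    have hm : (R : ℝ) ≤ m := Nat.cast_le.2 hm
    have hm0 : (0 : ℝ) < m := by linarith [le_max_right R₀ 3]
    have hdiag := one_sub_rho_diag_le hpos hmom (by linarith) hC₀.le
      (by linarith [le_max_right R₀ 3]) hbound n (m := m) (by linarith)
    calc (1 - rho μ (m + n.toNat) (m + (-n).toNat)) ^ 2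
        ≤ (C₀ * (2 * m : ℝ) ^ (-β) * (n : ℝ) ^ 2) ^ 2 :=
          pow_le_pow_left₀ (by linarith [rho_le_one hmom (m + n.toNat) (m + (-n).toNat)]) hdiag 2
      _ ≤ (C₀ * (m : ℝ) ^ (-β) * (n : ℝ) ^ 2) ^ 2 := by
          have h2m : (2 * m : ℝ) ^ (-β) ≤ (m : ℝ) ^ (-β) :=
            Real.rpow_le_rpow_of_nonpos hm0 (by linarith) (by linarith)
          gcongr
      _ = A * (m : ℝ) ^ (-p) := by
          rw [show -p = -β * 2 by ring, Real.rpow_mul hm0.le, Real.rpow_two]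
          ring
  obtain ⟨hsum, hle⟩ := summable_and_tsum_le_of_le_mul_rpow hp (by positivity)
    (fun m => sq_nonneg _) (fun m => by
      have h0 := rho_pos hmom hpos (m + n.toNat) (m + (-n).toNat)
      have h1 := rho_le_one hmom (m + n.toNat) (m + (-n).toNat)
      nlinarith) R htail
  refine ⟨hsum, hle.trans ?_⟩
  set W := (1 + |(n : ℝ)|) ^ (2 * max (1 / 2) (1 / β))
  have hW : 1 ≤ W := by
    have h := abs_rpow_le_one_add_abs_rpow (n : ℝ) le_rfl
      (show 0 ≤ 2 * max (1 / 2) (1 / β) by positivity)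
    rwa [Real.rpow_zero] at h
  have hAW : A ^ (1 / p) ≤ (C₀ ^ 2) ^ (1 / p) * W := by
    have hn4 : ((n : ℝ) ^ 4) ^ (1 / p) = |(n : ℝ)| ^ (2 / β) := by
      rw [← Even.pow_abs (by decide), ← Real.rpow_natCast, ← Real.rpow_mul (abs_nonneg _)]
      congr 1
      field_simp
      ring
    rw [Real.mul_rpow (by positivity) (by positivity), hn4]
    refine mul_le_mul_of_nonneg_left (abs_rpow_le_one_add_abs_rpow _ (by positivity) ?_)
      (by positivity)
    rw [div_eq_mul_one_div]
    exact mul_le_mul_of_nonneg_left (le_max_right _ _) zero_le_two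
  have hp1 : 0 < p - 1 := by linarith
  rw [mul_assoc]
  refine mul_le_mul_of_nonneg_left ?_ (by positivity)
  nlinarith [Real.rpow_nonneg (sq_nonneg C₀) (1 / p)]

/-- `(n, m) ↦` the `m`-th entry `(j, k)` of the diagonal `j - k = n` of an `ℕ × ℕ` matrix. -/
def diagonalEquiv : ℤ × ℕ ≃ ℕ × ℕ where
  toFun x := (x.2 + x.1.toNat, x.2 + (-x.1).toNat)
  invFun y := ((y.1 : ℤ) - y.2, min y.1 y.2)
  left_inv := by
    rintro ⟨n, m⟩
    ext <;> simp
    omega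
  right_inv := by
    rintro ⟨j, k⟩
    ext <;> simp <;> omega

lemma summable_and_tsum_le_of_diagonal {b v : ℤ → ℝ} {ψ : ℕ → ℕ → ℝ} {C : ℝ}
    (hb : ∀ n, 0 ≤ b n) (hψ : ∀ j k, 0 ≤ ψ j k)
    (hdiag : ∀ n : ℤ, Summable (fun m : ℕ => ψ (m + n.toNat) (m + (-n).toNat)) ∧
      ∑' m : ℕ, ψ (m + n.toNat) (m + (-n).toNat) ≤ C * v n)
    (hv : Summable fun n => b n * v n) :
    Summable (fun p : ℕ × ℕ => b ((p.1 : ℤ) - p.2) * ψ p.1 p.2) ∧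
      ∑' p : ℕ × ℕ, b ((p.1 : ℤ) - p.2) * ψ p.1 p.2 ≤ C * ∑' n, b n * v n := by
  set F := fun p : ℕ × ℕ => b ((p.1 : ℤ) - p.2) * ψ p.1 p.2
  set G := fun x : ℤ × ℕ => b x.1 * ψ (x.2 + x.1.toNat) (x.2 + (-x.1).toNat)
  have hFG : F ∘ diagonalEquiv = G := by
    ext ⟨n, m⟩
    simp only [Function.comp_apply, F, G, diagonalEquiv, Equiv.coe_fn_mk]
    congr 2
    push_cast
    omega
  have hfiber : ∀ n, Summable fun m => G (n, m) := fun n => (hdiag n).1.mul_left (b n)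
  have hfiber_le : ∀ n, ∑' m, G (n, m) ≤ C * (b n * v n) := fun n => by
    simp only [G]
    rw [tsum_mul_left, mul_left_comm]
    exact mul_le_mul_of_nonneg_left (hdiag n).2 (hb n)
  have houter : Summable fun n => ∑' m, G (n, m) := (hv.mul_left C).of_nonneg_of_le
    (fun n => tsum_nonneg fun m => mul_nonneg (hb _) (hψ _ _)) hfiber_le
  have hG : Summable G :=
    (summable_prod_of_nonneg fun x => mul_nonneg (hb _) (hψ _ _)).2 ⟨hfiber, houter⟩
  have hF : Summable F := diagonalEquiv.summable_iff.1 (hFG ▸ hG)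
  refine ⟨hF, ?_⟩
  calc ∑' p, F p = ∑' x, G x := by rw [← hFG, Function.comp_def, diagonalEquiv.tsum_eq]
    _ = ∑' n, ∑' m, G (n, m) := hG.tsum_prod' hfiber
    _ ≤ ∑' n, C * (b n * v n) :=
        houter.tsum_le_tsum hfiber_le (hv.mul_left C)
    _ = C * ∑' n, b n * v n := tsum_mul_left

theorem K_hilbert_schmidt_general
    (μ : Measure ℝ)
    (hpos : μ (Set.Ioi (0:ℝ)) ≠ 0)
    (hmom : ∀ ξ : ℝ, 0 ≤ ξ → IntegrableOn (fun r : ℝ => r ^ ξ) (Set.Ioi (0:ℝ)) μ)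
    (β : ℝ) (hβ : 1/2 < β)
    (hO : (fun ξ => deriv (deriv fun t => Real.log (mom μ t)) ξ)
            =O[atTop] fun ξ : ℝ => ξ ^ (-β))
    (σ : ℝ) (hσ : σ = max (1/2) (1/β)) :
    ∃ C : ℝ, 0 < C ∧ ∀ a : AddCircle (2 * Real.pi) → ℂ,
      Integrable a AddCircle.haarAddCircle →
      Summable (fun n : ℤ => ‖fourierCoeff a n‖^2 * (1 + |(n:ℝ)|) ^ (2*σ)) →
      Summable (fun p : ℕ × ℕ =>
          ‖fourierCoeff a ((p.1 : ℤ) - (p.2 : ℤ))‖^2 * (1 - rho μ p.1 p.2)^2) ∧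
      (∑' p : ℕ × ℕ, ‖fourierCoeff a ((p.1 : ℤ) - (p.2 : ℤ))‖^2 * (1 - rho μ p.1 p.2)^2)
        ≤ C^2 * ∑' n : ℤ, ‖fourierCoeff a n‖^2 * (1 + |(n:ℝ)|) ^ (2*σ) := by
  subst hσ
  obtain ⟨C, hC, hdiag⟩ := exists_tsum_one_sub_rho_sq_le hpos hmom hβ hO
  refine ⟨Real.sqrt C, Real.sqrt_pos.2 hC, fun a _ hsum => ?_⟩
  rw [Real.sq_sqrt hC.le]
  exact summable_and_tsum_le_of_diagonal (b := fun n => ‖fourierCoeff a n‖ ^ 2)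
    (ψ := fun j k => (1 - rho μ j k) ^ 2) (fun n => by positivity) (fun j k => sq_nonneg _)
    hdiag hsum

/-- If `β > 1/2`, `(ln m_ξ)'' = O(ξ^{−β})` and `σ = max{1/2, 1/β}`, then there
is `C_μ > 0` such that for every `a ∈ Fℓ²_σ` the operator `K_μ(a)` is Hilbert–Schmidt:
`Σ_{j,k} |a_{j−k}|²(1−ρ_{j,k})² ≤ C_μ² ‖a‖²_{Fℓ²_σ}`. -/
theorem K_hilbert_schmidt
    (μ : Measure ℝ)
    (hsupp : μ (Set.Iic (0:ℝ)) = 0)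
    (hpos : μ (Set.Ioi (0:ℝ)) ≠ 0)
    (hmom : ∀ ξ : ℝ, 0 ≤ ξ → IntegrableOn (fun r : ℝ => r ^ ξ) (Set.Ioi (0:ℝ)) μ)
    (β : ℝ) (hβ : 1/2 < β)
    (hO : (fun ξ => deriv (deriv fun t => Real.log (mom μ t)) ξ)
            =O[atTop] fun ξ : ℝ => ξ ^ (-β))
    (σ : ℝ) (hσ : σ = max (1/2) (1/β)) :
    ∃ C : ℝ, 0 < C ∧ ∀ a : AddCircle (2 * Real.pi) → ℂ,
      Integrable a AddCircle.haarAddCircle →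
      Summable (fun n : ℤ => ‖fourierCoeff a n‖^2 * (1 + |(n:ℝ)|) ^ (2*σ)) →
      Summable (fun p : ℕ × ℕ =>
          ‖fourierCoeff a ((p.1 : ℤ) - (p.2 : ℤ))‖^2 * (1 - rho μ p.1 p.2)^2) ∧
      (∑' p : ℕ × ℕ, ‖fourierCoeff a ((p.1 : ℤ) - (p.2 : ℤ))‖^2 * (1 - rho μ p.1 p.2)^2)
        ≤ C^2 * ∑' n : ℤ, ‖fourierCoeff a n‖^2 * (1 + |(n:ℝ)|) ^ (2*σ) :=
  K_hilbert_schmidt_general μ hpos hmom β hβ hO σ hσ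

end
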